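/- arXiv:1304.1991 — 3 statements merged into one kernel-verified Lean document; each statement's English description precedes it below -/
import Mathlib

section
/- For every k ∈ ℤ₊ⁿ, the set W(k) contains a compact word, i.e., a word of the form (π(1) repeated m₁ times, π(2) repeated m₂ times, …, π(n) repeated m_n times) for some permutation π ∈ S_n and nonnegative integers m₁,…,m_n (necessarily m_i = k_{π(i)}). -/
/-!
Monomials of the quantum affine space are nonzero: they act injectively on `ℂ[X₁, …, Xₙ]`,
where `xᵢ` acts as multiplication by `Xᵢ` after rescaling each `Xⱼ`, `j < i`, by `q i j`.
Hence `λ(σ, δ(k))` is determined by the word `σ·δ(k)`, and rewriting its monomial as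
`z • x_γ` with `‖z‖ ≤ 1` turns a minimiser into a minimiser.

Every word can be rewritten so into a compact one, by induction on its length. For `a :: γ`
with `γ = X ++ aᶜ ++ Y` compact and `a ∉ X`, either move the leading `a` right past `X`, at the
cost `P = ∏_{b ∈ X} q a b`, or move the block `aᶜ` left past `X`, at the cost `P⁻ᶜ`; one of
these has norm at most one.
-/

noncomputable section

/-- `q` is multiplicatively antisymmetric: `q i i = 1` and `q j i * q i j = 1`. -/
def MultAntisym (n : ℕ) (q : Fin n → Fin n → ℂ) : Prop :=
  (∀ i, q i i = 1) ∧ (∀ i j, q j i * q i j = 1)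

/-- Relations of the quantum affine space: `x i * x j = q i j • (x j * x i)`. -/
def QRel (n : ℕ) (q : Fin n → Fin n → ℂ) :
    FreeAlgebra ℂ (Fin n) → FreeAlgebra ℂ (Fin n) → Prop :=
  fun a b => ∃ i j, a = FreeAlgebra.ι ℂ i * FreeAlgebra.ι ℂ j ∧
    b = q i j • (FreeAlgebra.ι ℂ j * FreeAlgebra.ι ℂ i)

/-- The generators `x i` of the quantum affine space algebra `O_q^reg(ℂⁿ)`. -/
def qGen {n : ℕ} (q : Fin n → Fin n → ℂ) (i : Fin n) : RingQuot (QRel n q) :=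
  RingQuot.mkAlgHom ℂ (QRel n q) (FreeAlgebra.ι ℂ i)

/-- The monomial `x_α = x_{α 1} ⋯ x_{α d}` associated to a word `α`. -/
def xWord {n d : ℕ} (q : Fin n → Fin n → ℂ) (α : Fin d → Fin n) : RingQuot (QRel n q) :=
  ((List.ofFn α).map (qGen q)).prod

/-- The action of `S_d` on words: `(σ·α) i = α (σ⁻¹ i)`. -/
def permAct {n d : ℕ} (σ : Equiv.Perm (Fin d)) (α : Fin d → Fin n) : Fin d → Fin n :=
  α ∘ σ.symm

/-- `α` is the sorted word `δ(k)` of the multidegree `k` : the letter `i` repeated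
`k i` times, in increasing order. -/
def IsSortedWord {n : ℕ} (k : Fin n → ℕ) {m : ℕ} (α : Fin m → Fin n) : Prop :=
  List.ofFn α = (List.ofFn fun i : Fin n => List.replicate (k i) i).flatten

namespace QuantumAffineSpace

open MvPolynomial

section ScaleVars

variable {σ R : Type*} [Field R]

def scaleVars (c : σ → R) : MvPolynomial σ R →ₐ[R] MvPolynomial σ R :=
  aeval fun j => C (c j) * X j

lemma scaleVars_X (c : σ → R) (j : σ) : scaleVars c (X j) = C (c j) * X j :=
  aeval_X _ _

lemma scaleVars_comp_scaleVars (c c' : σ → R) :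
    (scaleVars c).comp (scaleVars c') = scaleVars (c * c') := by
  refine algHom_ext fun j => ?_
  simp only [AlgHom.comp_apply, scaleVars_X, map_mul, Pi.mul_apply]
  rw [scaleVars, aeval_C, algebraMap_eq]
  ring

lemma scaleVars_injective {c : σ → R} (hc : ∀ j, c j ≠ 0) :
    Function.Injective (scaleVars c) := by
  have hinv : (scaleVars c⁻¹).comp (scaleVars c) = AlgHom.id R _ := by
    refine (scaleVars_comp_scaleVars _ _).trans (algHom_ext fun j => ?_)
    simp [scaleVars_X, hc j]
  exact Function.LeftInverse.injective (g := scaleVars c⁻¹) fun p => DFunLike.congr_fun hinv p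

end ScaleVars

section Words

variable {α : Type*}

lemma exists_perm_ofFn_comp_eq [LinearOrder α] {m : ℕ} (f : Fin m → α) {l : List α}
    (h : l.Perm (List.ofFn f)) : ∃ σ : Equiv.Perm (Fin m), List.ofFn (f ∘ σ) = l := by
  obtain rfl : l.length = m := by simpa using h.length_eq
  replace h : (List.ofFn l.get).Perm (List.ofFn f) := by rwa [List.ofFn_get]
  suffices ∃ σ : Equiv.Perm (Fin l.length), List.ofFn (f ∘ σ) = List.ofFn l.get by
    rwa [List.ofFn_get] at this
  have hsorted : f ∘ Tuple.sort f = l.get ∘ Tuple.sort l.get :=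
    List.ofFn_inj.mp <| (((Tuple.sort f).ofFn_comp_perm f).trans
        (h.symm.trans ((Tuple.sort l.get).ofFn_comp_perm l.get).symm)).eq_of_sortedLE
      (Tuple.monotone_sort f).sortedLE_ofFn (Tuple.monotone_sort l.get).sortedLE_ofFn
  refine ⟨(Tuple.sort l.get).symm.trans (Tuple.sort f), congrArg List.ofFn (funext fun x => ?_)⟩
  simpa using congrFun hsorted ((Tuple.sort l.get).symm x)

def blockWord (d : List α) (c : α → ℕ) : List α := d.flatMap fun j => List.replicate (c j) j

@[simp]
lemma blockWord_zero (d : List α) : blockWord d 0 = [] := by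
  simp [blockWord, List.flatMap_eq_nil_iff]

lemma blockWord_append (d d' : List α) (c : α → ℕ) :
    blockWord (d ++ d') c = blockWord d c ++ blockWord d' c :=
  List.flatMap_append

lemma blockWord_cons (a : α) (d : List α) (c : α → ℕ) :
    blockWord (a :: d) c = List.replicate (c a) a ++ blockWord d c :=
  List.flatMap_cons

lemma blockWord_update_of_notMem [DecidableEq α] {a : α} {d : List α} (ha : a ∉ d)
    (c : α → ℕ) (k : ℕ) : blockWord d (Function.update c a k) = blockWord d c :=
  List.flatMap_congr fun j hj => by rw [Function.update_of_ne (ne_of_mem_of_not_mem hj ha)]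

lemma exists_blockWord_eq_flatten_ofFn {n : ℕ} {d : List (Fin n)} (hd : d.Perm (List.finRange n))
    (c : Fin n → ℕ) : ∃ (π : Equiv.Perm (Fin n)) (mv : Fin n → ℕ),
      blockWord d c = (List.ofFn fun i => List.replicate (mv i) (π i)).flatten := by
  obtain ⟨π, hπ⟩ := exists_perm_ofFn_comp_eq (l := d) id (by rwa [List.ofFn_id])
  refine ⟨π, c ∘ π, ?_⟩
  rw [blockWord, List.flatMap_def, ← hπ, List.map_ofFn]
  rfl

end Words

variable {n : ℕ} {q : Fin n → Fin n → ℂ}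

variable (q) in
def twistFactor (i j : Fin n) : ℂ := if j < i then q i j else 1

lemma twistFactor_eq_mul (hq : MultAntisym n q) (i j : Fin n) :
    twistFactor q i j = q i j * twistFactor q j i := by
  rcases lt_trichotomy i j with h | rfl | h
  · simp [twistFactor, h, asymm h, hq.2 j i]
  · simp [twistFactor, hq.1 i]
  · simp [twistFactor, h, asymm h]

lemma twistFactor_ne_zero (hq : MultAntisym n q) (i j : Fin n) : twistFactor q i j ≠ 0 := by
  unfold twistFactor
  split_ifs
  · exact left_ne_zero_of_mul_eq_one (hq.2 j i)
  · exact one_ne_zero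

variable (q) in
def shiftOp (i : Fin n) : Module.End ℂ (MvPolynomial (Fin n) ℂ) :=
  LinearMap.mulLeft ℂ (X i) ∘ₗ (scaleVars (twistFactor q i)).toLinearMap

lemma shiftOp_apply (i : Fin n) (p : MvPolynomial (Fin n) ℂ) :
    shiftOp q i p = X i * scaleVars (twistFactor q i) p := rfl

lemma shiftOp_injective (hq : MultAntisym n q) (i : Fin n) : Function.Injective (shiftOp q i) :=
  (mul_right_injective₀ (X_ne_zero i)).comp (scaleVars_injective (twistFactor_ne_zero hq i))

lemma shiftOp_mul_shiftOp (hq : MultAntisym n q) (i j : Fin n) :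
    shiftOp q i * shiftOp q j = q i j • (shiftOp q j * shiftOp q i) := by
  refine LinearMap.ext fun p => ?_
  have hcomm (c c' : Fin n → ℂ) :
      scaleVars c (scaleVars c' p) = scaleVars c' (scaleVars c p) := by
    rw [← AlgHom.comp_apply, scaleVars_comp_scaleVars, mul_comm, ← scaleVars_comp_scaleVars,
      AlgHom.comp_apply]
  simp only [Module.End.mul_apply, LinearMap.smul_apply, shiftOp_apply, map_mul, scaleVars_X,
    hcomm (twistFactor q i), twistFactor_eq_mul hq i j, smul_eq_C_mul]
  ring

def shiftRep (hq : MultAntisym n q) :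
    RingQuot (QRel n q) →ₐ[ℂ] Module.End ℂ (MvPolynomial (Fin n) ℂ) :=
  RingQuot.liftAlgHom ℂ ⟨FreeAlgebra.lift ℂ (shiftOp q), by
    rintro _ _ ⟨i, j, rfl, rfl⟩
    simp only [map_mul, map_smul, FreeAlgebra.lift_ι_apply]
    exact shiftOp_mul_shiftOp hq i j⟩

lemma shiftRep_qGen (hq : MultAntisym n q) (i : Fin n) : shiftRep hq (qGen q i) = shiftOp q i := by
  rw [qGen, shiftRep, RingQuot.liftAlgHom_mkAlgHom_apply, FreeAlgebra.lift_ι_apply]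

variable (q) in
def xList (l : List (Fin n)) : RingQuot (QRel n q) := (l.map (qGen q)).prod

lemma xWord_eq_xList {d : ℕ} (α : Fin d → Fin n) : xWord q α = xList q (List.ofFn α) := rfl

@[simp]
lemma xList_nil : xList q [] = 1 := rfl

lemma xList_cons (a : Fin n) (l : List (Fin n)) : xList q (a :: l) = qGen q a * xList q l :=
  List.prod_cons

lemma shiftRep_xList_injective (hq : MultAntisym n q) (l : List (Fin n)) :
    Function.Injective (shiftRep hq (xList q l)) := by
  induction l with
  | nil => simpa [Module.End.coe_one] using Function.injective_id
  | cons a l ih =>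
    rw [xList_cons, map_mul, Module.End.coe_mul, shiftRep_qGen]
    exact (shiftOp_injective hq a).comp ih

lemma xList_ne_zero (hq : MultAntisym n q) (l : List (Fin n)) : xList q l ≠ 0 := fun h =>
  zero_ne_one (shiftRep_xList_injective hq l (a₁ := 0) (a₂ := 1) (by simp [h]))

variable (q) in
lemma qGen_mul_qGen (i j : Fin n) : qGen q i * qGen q j = q i j • (qGen q j * qGen q i) := by
  simpa only [map_mul, map_smul, qGen] using
    RingQuot.mkAlgHom_rel ℂ (s := QRel n q) ⟨i, j, rfl, rfl⟩

lemma xList_cons_append (a : Fin n) (X R : List (Fin n)) :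
    xList q (a :: (X ++ R)) = (X.map (q a)).prod • xList q (X ++ a :: R) := by
  induction X with
  | nil => simp
  | cons b X ih =>
    rw [List.cons_append, xList_cons, xList_cons, ← mul_assoc, qGen_mul_qGen, smul_mul_assoc,
      mul_assoc, ← xList_cons, ih, mul_smul_comm, smul_smul, List.cons_append, xList_cons,
      List.map_cons, List.prod_cons]

lemma xList_replicate_append (c : ℕ) (a : Fin n) (X R : List (Fin n)) :
    xList q (List.replicate c a ++ (X ++ R)) =
      (X.map (q a)).prod ^ c • xList q (X ++ (List.replicate c a ++ R)) := by
  induction c with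
  | zero => simp
  | succ c ih =>
    rw [List.replicate_succ, List.cons_append, xList_cons, ih, mul_smul_comm, ← xList_cons,
      xList_cons_append, smul_smul, pow_succ, List.cons_append]

lemma exists_norm_le_one_xList_cons_eq_smul (a : Fin n) (c : ℕ) (X Y : List (Fin n)) :
    ∃ z : ℂ, ‖z‖ ≤ 1 ∧
      (xList q (a :: (X ++ (List.replicate c a ++ Y))) =
          z • xList q (X ++ (List.replicate (c + 1) a ++ Y)) ∨
        xList q (a :: (X ++ (List.replicate c a ++ Y))) =
          z • xList q (List.replicate (c + 1) a ++ (X ++ Y))) := by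
  set P := (X.map (q a)).prod
  rcases le_or_gt ‖P‖ 1 with hP | hP
  · exact ⟨P, hP, Or.inl (xList_cons_append a X _)⟩
  · have hPc : P ^ c ≠ 0 := pow_ne_zero c (norm_pos_iff.mp (one_pos.trans hP))
    refine ⟨(P ^ c)⁻¹, ?_, Or.inr ?_⟩
    · rw [norm_inv, norm_pow]
      exact inv_le_one_of_one_le₀ (one_le_pow₀ hP.le)
    · rw [List.replicate_succ, List.cons_append, xList_cons, xList_cons, xList_replicate_append,
        mul_smul_comm, smul_smul, inv_mul_cancel₀ hPc, one_smul]

lemma exists_cons_blockWord_eq_smul {d : List (Fin n)} (hd : d.Nodup) {a : Fin n} (ha : a ∈ d)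
    (c : Fin n → ℕ) : ∃ d', d'.Perm d ∧ ∃ c', (a :: blockWord d c).Perm (blockWord d' c') ∧
      ∃ z : ℂ, ‖z‖ ≤ 1 ∧ xList q (a :: blockWord d c) = z • xList q (blockWord d' c') := by
  obtain ⟨d₁, d₂, rfl⟩ := List.append_of_mem ha
  have ha' : a ∉ d₁ ++ d₂ := (List.nodup_cons.mp (List.nodup_middle.mp hd)).1
  set c' := Function.update c a (c a + 1)
  have hc' : blockWord d₁ c' = blockWord d₁ c ∧ blockWord d₂ c' = blockWord d₂ c :=
    ⟨blockWord_update_of_notMem (fun h => ha' (List.mem_append_left _ h)) _ _,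
      blockWord_update_of_notMem (fun h => ha' (List.mem_append_right _ h)) _ _⟩
  have hca : c' a = c a + 1 := Function.update_self ..
  obtain ⟨z, hz, h | h⟩ := exists_norm_le_one_xList_cons_eq_smul (q := q) a (c a)
    (blockWord d₁ c) (blockWord d₂ c)
  · refine ⟨d₁ ++ a :: d₂, List.Perm.refl _, c', ?_, z, hz, ?_⟩
    · simpa [blockWord_append, blockWord_cons, hc', hca, List.replicate_succ] using
        List.perm_middle.symm
    · simpa [blockWord_append, blockWord_cons, hc', hca] using h
  · refine ⟨a :: (d₁ ++ d₂), List.perm_middle.symm, c', ?_, z, hz, ?_⟩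
    · simpa [blockWord_append, blockWord_cons, hc', hca, List.replicate_succ] using
        List.perm_append_comm_assoc _ _ _
    · simpa [blockWord_append, blockWord_cons, hc', hca] using h

lemma exists_blockWord_eq_smul {d : List (Fin n)} (hd : d.Nodup) (l : List (Fin n))
    (hl : ∀ a ∈ l, a ∈ d) : ∃ d', d'.Perm d ∧ ∃ c, l.Perm (blockWord d' c) ∧
      ∃ z : ℂ, ‖z‖ ≤ 1 ∧ xList q l = z • xList q (blockWord d' c) := by
  induction l with
  | nil => exact ⟨d, .refl d, 0, by simp, 1, by simp, by simp⟩
  | cons a l ih =>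
    obtain ⟨d', hd', c, hperm, z, hz, hx⟩ := ih fun b hb => hl b (List.mem_cons_of_mem a hb)
    obtain ⟨d'', hd'', c', hperm', z', hz', hx'⟩ := exists_cons_blockWord_eq_smul (q := q)
      (hd'.nodup_iff.mpr hd) (hd'.mem_iff.mpr (hl a List.mem_cons_self)) c
    refine ⟨d'', hd''.trans hd', c', (hperm.cons a).trans hperm', z * z', ?_, ?_⟩
    · simpa using mul_le_one₀ hz (norm_nonneg _) hz'
    · rw [xList_cons, hx, mul_smul_comm, ← xList_cons, hx', smul_smul]

end QuantumAffineSpace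

open QuantumAffineSpace in
theorem W_contains_compact_word_general (n : ℕ) (q : Fin n → Fin n → ℂ) (hq : MultAntisym n q)
    (m : ℕ) (α : Fin m → Fin n)
    -- `L σ` is the scalar `λ(σ, δ(k))`:
    (L : Equiv.Perm (Fin m) → ℂ)
    (hL : ∀ σ, xWord q α = L σ • xWord q (permAct σ α))
    -- `w = w_q(k)`:
    (w : ℝ) (hw : IsLeast {r | ∃ σ, r = ‖L σ‖} w) :
    ∃ σ : Equiv.Perm (Fin m), ‖L σ‖ = w ∧
      ∃ (π : Equiv.Perm (Fin n)) (mv : Fin n → ℕ),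
        List.ofFn (permAct σ α) =
          (List.ofFn fun i : Fin n => List.replicate (mv i) (π i)).flatten := by
  obtain ⟨σ₀, hσ₀⟩ := hw.1
  obtain ⟨d, hd, c, hperm, z, hz, hx⟩ := exists_blockWord_eq_smul (q := q)
    (List.nodup_finRange n) (List.ofFn (permAct σ₀ α)) fun a _ => List.mem_finRange a
  obtain ⟨τ, hτ⟩ :=
    exists_perm_ofFn_comp_eq α (hperm.symm.trans (Equiv.Perm.ofFn_comp_perm σ₀.symm α))
  have hσ : List.ofFn (permAct τ.symm α) = blockWord d c := by
    rw [permAct, Equiv.symm_symm, hτ]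
  have hLτ : L τ.symm = L σ₀ * z := by
    refine smul_left_injective ℂ (xList_ne_zero hq (blockWord d c)) ?_
    calc L τ.symm • xList q (blockWord d c) = xWord q α := by rw [hL τ.symm, xWord_eq_xList, hσ]
      _ = (L σ₀ * z) • xList q (blockWord d c) := by rw [hL σ₀, xWord_eq_xList, hx, smul_smul]
  obtain ⟨π, mv, hπ⟩ := exists_blockWord_eq_flatten_ofFn hd c
  refine ⟨τ.symm, le_antisymm ?_ (hw.2 ⟨_, rfl⟩), π, mv, hσ.trans hπ⟩
  rw [hLτ, norm_mul, hσ₀]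
  exact mul_le_of_le_one_right (norm_nonneg _) hz

theorem W_contains_compact_word (n : ℕ) (q : Fin n → Fin n → ℂ) (hq : MultAntisym n q)
    (k : Fin n → ℕ) (m : ℕ) (α : Fin m → Fin n) (hα : IsSortedWord k α)
    -- `L σ` is the scalar `λ(σ, δ(k))`:
    (L : Equiv.Perm (Fin m) → ℂ)
    (hL : ∀ σ, xWord q α = L σ • xWord q (permAct σ α))
    -- `w = w_q(k)`:
    (w : ℝ) (hw : IsLeast {r | ∃ σ, r = ‖L σ‖} w) :
    ∃ σ : Equiv.Perm (Fin m), ‖L σ‖ = w ∧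
      ∃ (π : Equiv.Perm (Fin n)) (mv : Fin n → ℕ),
        List.ofFn (permAct σ α) =
          (List.ofFn fun i : Fin n => List.replicate (mv i) (π i)).flatten :=
  W_contains_compact_word_general n q hq m α L hL w hw
end
end

section
/- Let k ∈ ℤ₊ⁿ and let α ∈ W(k) be noncompact; suppose the letter j has at least two maximal nonempty blocks in α. Then there exists σ ∈ S_{|k|} such that σ·α ∈ W(k), the number of maximal nonempty j-blocks of σ·α equals that of α minus 1, and every letter having at most one maximal nonempty block in α also has at most one in σ·α. -/
noncomputable section

/-- The number `N(l, j)` of maximal nonempty `j`-blocks (runs of the letter `j`) in `l`. -/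
def countBlocks {n : ℕ} (j : Fin n) : List (Fin n) → ℕ
  | [] => 0
  | [a] => if a = j then 1 else 0
  | a :: b :: l => (if a = j ∧ b ≠ j then 1 else 0) + countBlocks j (b :: l)

/-
Write `α' = u j^a v j^b w` with `j^a`, `j^b` the first two maximal `j`-blocks, and let
`Q = ∏_{s ∈ v} q j s`, the scalar picked up when one letter `j` crosses `v`. Merging the
blocks to the left gives `x_{u j^(a+b) v w} = Q^b x_{α'}`, merging them to the right gives
`x_{α'} = Q^a x_{u v j^(a+b) w}`. Since `|λ(τ, δ(k))| = w_q(k)` is minimal, the second identity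
forces `|Q| ≥ 1` and the first then forces the left merge to be minimal as well. The left merge
has one fewer `j`-block and splits no block of any other letter. Scalars can be compared because
monomials are nonzero: the `x i` act on `ℂ[ℕⁿ]` by twisted shifts, under which every monomial
sends `1` to a nonzero multiple of a basis vector.
-/

lemma pow_mul_eq_smul_mul_pow {R A : Type*} [Monoid R] [Monoid A] [MulAction R A]
    [SMulCommClass R A A] [IsScalarTower R A A] {x y : A} {c : R}
    (h : y * x = c • (x * y)) (a : ℕ) : y ^ a * x = c ^ a • (x * y ^ a) := by
  induction a with
  | zero => simp
  | succ a ih =>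
    rw [pow_succ, mul_assoc, h, mul_smul_comm, ← mul_assoc, ih, smul_mul_assoc, smul_smul,
      mul_assoc, ← pow_succ, ← pow_succ']

lemma norm_eq_of_eq_mul_pow {𝕜 : Type*} [NormedDivisionRing 𝕜] {x y z Q : 𝕜} {a b : ℕ}
    (ha : a ≠ 0) (hx : x ≠ 0) (hxy : x = y * Q ^ b) (hzx : z = x * Q ^ a)
    (hy : ‖x‖ ≤ ‖y‖) (hz : ‖x‖ ≤ ‖z‖) : ‖y‖ = ‖x‖ := by
  have hQ : 1 ≤ ‖Q‖ := by
    rw [hzx, norm_mul, norm_pow] at hz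
    exact (one_le_pow_iff_of_nonneg (norm_nonneg Q) ha).1 <|
      le_of_mul_le_mul_left (by simpa using hz) (norm_pos_iff.2 hx)
  refine le_antisymm ?_ hy
  calc ‖y‖ ≤ ‖y‖ * ‖Q‖ ^ b := le_mul_of_one_le_right (norm_nonneg y) (one_le_pow₀ hQ)
    _ = ‖x‖ := by rw [hxy, norm_mul, norm_pow]

lemma exists_perm_ofFn_comp_eq {α : Type*} [LinearOrder α] {m : ℕ} (f : Fin m → α)
    {l : List α} (h : l.Perm (List.ofFn f)) :
    ∃ σ : Equiv.Perm (Fin m), List.ofFn (f ∘ σ) = l := by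
  have hlen : l.length = m := by simpa using h.length_eq
  obtain ⟨g, rfl⟩ : ∃ g : Fin m → α, List.ofFn g = l :=
    ⟨fun i => l.get (i.cast hlen.symm), by rw [← List.ofFn_congr hlen, List.ofFn_get]⟩
  have hsort : g ∘ Tuple.sort g = f ∘ Tuple.sort f := List.ofFn_injective <|
    (((Equiv.Perm.ofFn_comp_perm _ g).trans h).trans
      (Equiv.Perm.ofFn_comp_perm _ f).symm).eq_of_pairwise'
      (Tuple.monotone_sort g).sortedLE_ofFn.pairwise (Tuple.monotone_sort f).sortedLE_ofFn.pairwise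
  refine ⟨(Tuple.sort g).symm.trans (Tuple.sort f), congrArg List.ofFn (funext fun i => ?_)⟩
  simpa using (congrFun hsort ((Tuple.sort g).symm i)).symm

section Merge

variable {α : Type*} (u v w : List α) (j : α) (a b : ℕ)

lemma List.perm_merge_left :
    (u ++ replicate (a + b) j ++ v ++ w).Perm (u ++ replicate a j ++ v ++ replicate b j ++ w) := by
  simpa only [replicate_add, append_assoc] using
    ((perm_append_comm_assoc _ _ w).append_left _).append_left u

lemma List.perm_merge_right :
    (u ++ v ++ replicate (a + b) j ++ w).Perm (u ++ replicate a j ++ v ++ replicate b j ++ w) := by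
  simpa only [replicate_add, append_assoc] using (perm_append_comm_assoc v _ _).append_left u

end Merge

section Blocks

variable {n : ℕ} {j j' : Fin n}

lemma countBlocks_cons (j a : Fin n) (l : List (Fin n)) :
    countBlocks j (a :: l) = (if a = j ∧ l.head? ≠ some j then 1 else 0) + countBlocks j l := by
  cases l <;> simp [countBlocks]

lemma countBlocks_append (j : Fin n) (x y : List (Fin n)) :
    countBlocks j (x ++ y) + (if x.getLast? = some j ∧ y.head? = some j then 1 else 0)
      = countBlocks j x + countBlocks j y := by
  induction x with
  | nil => simp [countBlocks]
  | cons a t ih =>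
    rcases eq_or_ne t [] with rfl | ht
    · by_cases a = j <;> by_cases y.head? = some j <;> simp_all [countBlocks_cons, add_comm]
    · rw [List.cons_append, countBlocks_cons, countBlocks_cons, List.getLast?_cons_of_ne_nil ht,
        List.head?_append_of_ne_nil _ ht]
      omega

lemma countBlocks_append_eq_add {x y : List (Fin n)}
    (h : ¬(x.getLast? = some j ∧ y.head? = some j)) :
    countBlocks j (x ++ y) = countBlocks j x + countBlocks j y := by
  simpa [h] using countBlocks_append j x y

lemma countBlocks_append_le (x y : List (Fin n)) :
    countBlocks j (x ++ y) ≤ countBlocks j x + countBlocks j y := by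
  have := countBlocks_append j x y
  omega

lemma countBlocks_eq_zero_of_notMem {l : List (Fin n)} (h : j ∉ l) : countBlocks j l = 0 := by
  induction l with
  | nil => rfl
  | cons a t ih =>
    simp only [List.mem_cons, not_or] at h
    simp [countBlocks_cons, ih h.2, Ne.symm h.1]

lemma mem_of_countBlocks_ne_zero {l : List (Fin n)} (h : countBlocks j l ≠ 0) : j ∈ l := by
  by_contra hj
  exact h (countBlocks_eq_zero_of_notMem hj)

lemma countBlocks_replicate_self {c : ℕ} (hc : c ≠ 0) :
    countBlocks j (List.replicate c j) = 1 := by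
  obtain ⟨c, rfl⟩ := Nat.exists_eq_succ_of_ne_zero hc
  induction c with
  | zero => simp [countBlocks]
  | succ c ih => simpa [List.replicate_succ, countBlocks_cons] using ih

lemma countBlocks_append_replicate_append {c : ℕ} (hc : c ≠ 0) {x y : List (Fin n)}
    (hx : x.getLast? ≠ some j) (hy : y.head? ≠ some j) :
    countBlocks j (x ++ List.replicate c j ++ y) = countBlocks j x + 1 + countBlocks j y := by
  rw [countBlocks_append_eq_add (by simp [hy]), countBlocks_append_eq_add (by simp [hx]),
    countBlocks_replicate_self hc]

lemma countBlocks_append_replicate_append_of_ne {c : ℕ} (hc : c ≠ 0) (h : j ≠ j')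
    (x y : List (Fin n)) :
    countBlocks j' (x ++ List.replicate c j ++ y) = countBlocks j' x + countBlocks j' y := by
  have hj' : j' ∉ List.replicate c j := fun hm => h (List.eq_of_mem_replicate hm).symm
  rw [countBlocks_append_eq_add (by simp [List.getLast?_replicate, hc, h]),
    countBlocks_append_eq_add (by simp [List.head?_replicate, hc, h]),
    countBlocks_eq_zero_of_notMem hj', add_zero]

lemma exists_eq_append_replicate_append {l : List (Fin n)} (h : j ∈ l) :
    ∃ u a w, l = u ++ List.replicate a j ++ w ∧ a ≠ 0 ∧ j ∉ u ∧ w.head? ≠ some j := by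
  induction l with
  | nil => simp at h
  | cons c t ih =>
    by_cases hc : c = j
    · subst hc
      by_cases ht : t.head? = some c
      · obtain ⟨u, a, w, rfl, ha, hu, hw⟩ := ih (List.mem_of_mem_head? ht)
        obtain rfl : u = [] := by
          cases u with
          | nil => rfl
          | cons e u => simp_all
        exact ⟨[], a + 1, w, by simp [List.replicate_succ], by omega, by simp, hw⟩
      · exact ⟨[], 1, t, by simp, one_ne_zero, by simp, ht⟩
    · obtain ⟨u, a, w, rfl, ha, hu, hw⟩ := ih (by simpa [Ne.symm hc] using h)
      exact ⟨c :: u, a, w, rfl, ha, by simp [Ne.symm hc, hu], hw⟩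

lemma exists_eq_two_blocks {l : List (Fin n)} (h : 2 ≤ countBlocks j l) :
    ∃ u a v b w, l = u ++ List.replicate a j ++ v ++ List.replicate b j ++ w ∧ a ≠ 0 ∧ b ≠ 0 ∧
      u.getLast? ≠ some j ∧ v ≠ [] ∧ j ∉ v ∧ w.head? ≠ some j := by
  obtain ⟨u, a, w₁, rfl, ha, hu, hw₁⟩ :=
    exists_eq_append_replicate_append (mem_of_countBlocks_ne_zero (by omega : countBlocks j l ≠ 0))
  have hu' : u.getLast? ≠ some j := fun h => hu (List.mem_of_getLast? h)
  rw [countBlocks_append_replicate_append ha hu' hw₁, countBlocks_eq_zero_of_notMem hu] at h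
  obtain ⟨v, b, w, rfl, hb, hv, hw⟩ :=
    exists_eq_append_replicate_append (mem_of_countBlocks_ne_zero (by omega : countBlocks j w₁ ≠ 0))
  refine ⟨u, a, v, b, w, by simp, ha, hb, hu', ?_, hv, hw⟩
  rintro rfl
  simp [List.head?_replicate, hb] at hw₁

variable {u v w : List (Fin n)} {a b : ℕ}

lemma countBlocks_merge (ha : a ≠ 0) (hb : b ≠ 0) (hu : u.getLast? ≠ some j) (hv : v ≠ [])
    (hjv : j ∉ v) (hw : w.head? ≠ some j) :
    countBlocks j (u ++ List.replicate (a + b) j ++ v ++ w) + 1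
      = countBlocks j (u ++ List.replicate a j ++ v ++ List.replicate b j ++ w) := by
  have hvh : v.head? ≠ some j := fun h => hjv (List.mem_of_mem_head? h)
  have hvl : v.getLast? ≠ some j := fun h => hjv (List.mem_of_getLast? h)
  rw [List.append_assoc _ v w,
    countBlocks_append_replicate_append (by omega) hu (by rwa [List.head?_append_of_ne_nil _ hv]),
    countBlocks_append_replicate_append hb (by rwa [List.getLast?_append_of_ne_nil _ hv]) hw,
    countBlocks_append_eq_add (by simp [hvl]), countBlocks_append_replicate_append ha hu hvh,
    countBlocks_eq_zero_of_notMem hjv]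
  omega

lemma countBlocks_merge_le_of_ne (ha : a ≠ 0) (hb : b ≠ 0) (h : j ≠ j') :
    countBlocks j' (u ++ List.replicate (a + b) j ++ v ++ w)
      ≤ countBlocks j' (u ++ List.replicate a j ++ v ++ List.replicate b j ++ w) := by
  rw [List.append_assoc _ v w, countBlocks_append_replicate_append_of_ne (by omega) h,
    countBlocks_append_replicate_append_of_ne hb h, countBlocks_append_replicate_append_of_ne ha h]
  have := countBlocks_append_le (j := j') v w
  omega

end Blocks

section Representation

open Finsupp

variable {n : ℕ} (q : Fin n → Fin n → ℂ)

def twist (i : Fin n) (d : Fin n →₀ ℕ) : ℂ :=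
  d.prod fun t k => if t < i then q i t ^ k else 1

lemma twist_add_single (i j : Fin n) (d : Fin n →₀ ℕ) :
    twist q i (d + single j 1) = twist q i d * if j < i then q i j else 1 := by
  rw [twist, prod_add_index', prod_single_index, ← twist] <;> intros <;> split_ifs <;>
    simp [pow_add]

def shiftOp (i : Fin n) : Module.End ℂ ((Fin n →₀ ℕ) →₀ ℂ) :=
  linearCombination ℂ fun d => single (d + single i 1) (twist q i d)

lemma shiftOp_single (i : Fin n) (d : Fin n →₀ ℕ) (x : ℂ) :
    shiftOp q i (single d x) = single (d + single i 1) (x * twist q i d) := by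
  simp [shiftOp, smul_single]

variable {q}

lemma twist_ne_zero (hq : MultAntisym n q) (i : Fin n) (d : Fin n →₀ ℕ) : twist q i d ≠ 0 :=
  prod_ne_zero_iff.2 fun t _ => by
    split_ifs
    exacts [pow_ne_zero _ (right_ne_zero_of_mul_eq_one (hq.2 i t)), one_ne_zero]

lemma shiftOp_mul_shiftOp (hq : MultAntisym n q) (i j : Fin n) :
    shiftOp q i * shiftOp q j = q i j • (shiftOp q j * shiftOp q i) := by
  refine lhom_ext fun d x => ?_
  simp only [Module.End.mul_apply, LinearMap.smul_apply, shiftOp_single, twist_add_single,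
    smul_single, add_right_comm d (single i 1)]
  congr 1
  rcases lt_trichotomy i j with h | rfl | h
  · simp only [h, h.not_gt, if_true, if_false, smul_eq_mul]
    linear_combination (-(x * twist q i d * twist q j d)) * hq.2 i j
  · simp [hq.1]
  · simp only [h, h.not_gt, if_true, if_false, smul_eq_mul]
    ring

def shiftRep (hq : MultAntisym n q) :
    RingQuot (QRel n q) →ₐ[ℂ] Module.End ℂ ((Fin n →₀ ℕ) →₀ ℂ) :=
  RingQuot.liftAlgHom ℂ ⟨FreeAlgebra.lift ℂ (shiftOp q), by
    rintro _ _ ⟨i, j, rfl, rfl⟩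
    simpa using shiftOp_mul_shiftOp hq i j⟩

lemma shiftRep_qGen (hq : MultAntisym n q) (i : Fin n) :
    shiftRep hq (qGen q i) = shiftOp q i := by
  simp [shiftRep, qGen]

end Representation

section Monomial

variable {n : ℕ} {q : Fin n → Fin n → ℂ}

variable (q) in
def qMonomial (l : List (Fin n)) : RingQuot (QRel n q) :=
  (l.map (qGen q)).prod

lemma qMonomial_append (l₁ l₂ : List (Fin n)) :
    qMonomial q (l₁ ++ l₂) = qMonomial q l₁ * qMonomial q l₂ := by
  simp [qMonomial]

lemma qMonomial_replicate (c : ℕ) (j : Fin n) :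
    qMonomial q (List.replicate c j) = qGen q j ^ c := by
  simp [qMonomial]

lemma exists_shiftRep_qMonomial_eq_single (hq : MultAntisym n q) (l : List (Fin n)) :
    ∃ d c, c ≠ 0 ∧ shiftRep hq (qMonomial q l) (Finsupp.single 0 1) = Finsupp.single d c := by
  induction l with
  | nil => exact ⟨0, 1, one_ne_zero, by simp [qMonomial]⟩
  | cons a l ih =>
    obtain ⟨d, c, hc, h⟩ := ih
    refine ⟨d + Finsupp.single a 1, _, mul_ne_zero hc (twist_ne_zero hq a d), ?_⟩
    rw [← List.singleton_append, qMonomial_append, map_mul, Module.End.mul_apply, h]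
    simp [qMonomial, shiftRep_qGen, shiftOp_single]

lemma qMonomial_ne_zero (hq : MultAntisym n q) (l : List (Fin n)) : qMonomial q l ≠ 0 := by
  obtain ⟨d, c, hc, h⟩ := exists_shiftRep_qMonomial_eq_single hq l
  intro h0
  rw [h0, map_zero, LinearMap.zero_apply, eq_comm, Finsupp.single_eq_zero] at h
  exact hc h

lemma eq_mul_of_qMonomial_eq_smul (hq : MultAntisym n q) {x : RingQuot (QRel n q)}
    {l₁ l₂ : List (Fin n)} {c₁ c₂ d : ℂ} (h₁ : x = c₁ • qMonomial q l₁)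
    (h₂ : x = c₂ • qMonomial q l₂) (h : qMonomial q l₁ = d • qMonomial q l₂) : c₂ = c₁ * d := by
  rw [h, smul_smul] at h₁
  exact smul_left_injective ℂ (qMonomial_ne_zero hq l₂) (h₂.symm.trans h₁)

lemma qGen_mul_qGen (i j : Fin n) : qGen q i * qGen q j = q i j • (qGen q j * qGen q i) := by
  simp only [qGen, ← map_mul, ← map_smul]
  exact RingQuot.mkAlgHom_rel ℂ ⟨i, j, rfl, rfl⟩

lemma qGen_mul_qMonomial (j : Fin n) (v : List (Fin n)) :
    qGen q j * qMonomial q v = (v.map (q j)).prod • (qMonomial q v * qGen q j) := by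
  induction v with
  | nil => simp [qMonomial]
  | cons s v ih =>
    simp only [qMonomial, List.map_cons, List.prod_cons] at ih ⊢
    rw [← mul_assoc, qGen_mul_qGen, smul_mul_assoc, mul_assoc, ih, mul_smul_comm, smul_smul,
      mul_assoc]

lemma qMonomial_replicate_swap (x v y : List (Fin n)) (j : Fin n) (c : ℕ) :
    qMonomial q (x ++ List.replicate c j ++ v ++ y)
      = (v.map (q j)).prod ^ c • qMonomial q (x ++ v ++ List.replicate c j ++ y) := by
  simp only [qMonomial_append, qMonomial_replicate, mul_assoc,
    pow_mul_eq_smul_mul_pow (qGen_mul_qMonomial j v), mul_smul_comm, smul_mul_assoc]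

variable (u v w : List (Fin n)) (j : Fin n) (a b : ℕ)

lemma qMonomial_merge_left :
    qMonomial q (u ++ List.replicate (a + b) j ++ v ++ w) = (v.map (q j)).prod ^ b •
      qMonomial q (u ++ List.replicate a j ++ v ++ List.replicate b j ++ w) := by
  simpa only [List.replicate_add, List.append_assoc] using
    qMonomial_replicate_swap (u ++ List.replicate a j) v w j b

lemma qMonomial_merge_right :
    qMonomial q (u ++ List.replicate a j ++ v ++ List.replicate b j ++ w) =
      (v.map (q j)).prod ^ a • qMonomial q (u ++ v ++ List.replicate (a + b) j ++ w) := by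
  simpa only [List.replicate_add, List.append_assoc] using
    qMonomial_replicate_swap u v (List.replicate b j ++ w) j a

end Monomial

theorem compactification_step_general (n : ℕ) (q : Fin n → Fin n → ℂ) (hq : MultAntisym n q)
    (m : ℕ) (α : Fin m → Fin n)
    -- `L σ` is the scalar `λ(σ, δ(k))`:
    (L : Equiv.Perm (Fin m) → ℂ)
    (hL : ∀ σ, xWord q α = L σ • xWord q (permAct σ α))
    -- `w = w_q(k)`:
    (w : ℝ) (hw : IsLeast {r | ∃ σ, r = ‖L σ‖} w)
    -- `α' = τ·δ(k)` is an element of `W(k)`: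
    (τ : Equiv.Perm (Fin m)) (hτ : ‖L τ‖ = w)
    -- the letter `j` has at least two maximal nonempty blocks in `α'`:
    (j : Fin n) (hj : 2 ≤ countBlocks j (List.ofFn (permAct τ α))) :
    ∃ σ : Equiv.Perm (Fin m),
      (permAct σ (permAct τ α) ∈
        {β | ∃ σ', β = permAct σ' α ∧ ‖L σ'‖ = w}) ∧
      countBlocks j (List.ofFn (permAct σ (permAct τ α))) =
        countBlocks j (List.ofFn (permAct τ α)) - 1 ∧
      ∀ j' : Fin n, countBlocks j' (List.ofFn (permAct τ α)) ≤ 1 →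
        countBlocks j' (List.ofFn (permAct σ (permAct τ α))) ≤ 1 := by
  obtain ⟨u, a, v, b, w', hX, ha, hb, hu, hv, hjv, hw'⟩ := exists_eq_two_blocks hj
  obtain ⟨σ₁, hσ₁⟩ := exists_perm_ofFn_comp_eq _ (hX ▸ List.perm_merge_left u v w' j a b)
  obtain ⟨σ₂, hσ₂⟩ := exists_perm_ofFn_comp_eq _ (hX ▸ List.perm_merge_right u v w' j a b)
  have hLτ : xWord q α = L τ • qMonomial q (List.ofFn (permAct τ α)) := hL τ
  have hL₁ : xWord q α =
      L (σ₁⁻¹ * τ) • qMonomial q (u ++ List.replicate (a + b) j ++ v ++ w') := hσ₁ ▸ hL _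
  have hL₂ : xWord q α =
      L (σ₂⁻¹ * τ) • qMonomial q (u ++ v ++ List.replicate (a + b) j ++ w') := hσ₂ ▸ hL _
  have hLτ_ne : L τ ≠ 0 := fun h => qMonomial_ne_zero hq _ (by rwa [h, zero_smul] at hLτ)
  have hnorm : ‖L (σ₁⁻¹ * τ)‖ = w := hτ ▸ norm_eq_of_eq_mul_pow ha hLτ_ne
    (eq_mul_of_qMonomial_eq_smul hq hL₁ hLτ (hX ▸ qMonomial_merge_left u v w' j a b))
    (eq_mul_of_qMonomial_eq_smul hq hLτ hL₂ (hX ▸ qMonomial_merge_right u v w' j a b))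
    (hτ ▸ hw.2 ⟨_, rfl⟩) (hτ ▸ hw.2 ⟨_, rfl⟩)
  have hY : List.ofFn (permAct σ₁⁻¹ (permAct τ α)) = u ++ List.replicate (a + b) j ++ v ++ w' :=
    hσ₁
  have hmerge := countBlocks_merge ha hb hu hv hjv hw'
  refine ⟨σ₁⁻¹, ⟨σ₁⁻¹ * τ, rfl, hnorm⟩, by rw [hY, hX]; omega, fun j' hj' => ?_⟩
  rw [hY]
  rw [hX] at hj'
  rcases eq_or_ne j j' with rfl | hjj'
  · omega
  · exact (countBlocks_merge_le_of_ne ha hb hjj').trans hj'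

theorem compactification_step (n : ℕ) (q : Fin n → Fin n → ℂ) (hq : MultAntisym n q)
    (k : Fin n → ℕ) (m : ℕ) (α : Fin m → Fin n) (hα : IsSortedWord k α)
    -- `L σ` is the scalar `λ(σ, δ(k))`:
    (L : Equiv.Perm (Fin m) → ℂ)
    (hL : ∀ σ, xWord q α = L σ • xWord q (permAct σ α))
    -- `w = w_q(k)`:
    (w : ℝ) (hw : IsLeast {r | ∃ σ, r = ‖L σ‖} w)
    -- `α' = τ·δ(k)` is an element of `W(k)`:
    (τ : Equiv.Perm (Fin m)) (hτ : ‖L τ‖ = w)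
    -- the letter `j` has at least two maximal nonempty blocks in `α'`:
    (j : Fin n) (hj : 2 ≤ countBlocks j (List.ofFn (permAct τ α))) :
    ∃ σ : Equiv.Perm (Fin m),
      (permAct σ (permAct τ α) ∈
        {β | ∃ σ', β = permAct σ' α ∧ ‖L σ'‖ = w}) ∧
      countBlocks j (List.ofFn (permAct σ (permAct τ α))) =
        countBlocks j (List.ofFn (permAct τ α)) - 1 ∧
      ∀ j' : Fin n, countBlocks j' (List.ofFn (permAct τ α)) ≤ 1 →
        countBlocks j' (List.ofFn (permAct σ (permAct τ α))) ≤ 1 :=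
  compactification_step_general n q hq m α L hL w hw τ hτ j hj
end
end

section
/- Let S be a unital semigroup acting on a complete locally convex topological algebra A (with jointly continuous multiplication) by continuous endomorphisms, such that the action is equicontinuous. Then the action extends to a jointly continuous bilinear map ℓ¹(S) × A → A given by (∑_s c_s s, a) ↦ ∑_s c_s (s·a), where the family (c_s (s·a))_{s∈S} is absolutely summable in A; this makes A a left ℓ¹(S)-module algebra. Conversely, if A is a left ℓ¹(S)-module algebra (with jointly continuous action), then the induced action of S ⊂ ℓ¹(S) on A is equicontinuous. -/
/-!
Equicontinuity means that every continuous seminorm `p` is dominated by one continuous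
seminorm `q` uniformly over the action, so `p (∑ c_s (s·a)) ≤ ‖c‖₁ q a`: the series converge
absolutely in the complete space `A`, and this estimate makes the resulting bilinear map jointly
continuous. As `A` need not be Hausdorff, the sums have canonical values only in the separation
quotient; a bilinear lift back to `A` is obtained from a linear section of the quotient map,
corrected so as to agree with the action on the linearly independent point masses.

Conversely, joint continuity at `(0, 0)` makes `F` `p`-small on a product of balls
`‖c‖ < ε`, `q a < r`; rescaling each argument turns this into `p (F (c, a)) ≤ ‖c‖ q a / (ε r)`,
and the point masses have norm one.
-/

open Filter Topology
open scoped lp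

section LinearAlgebra

variable {K ι M N P Q : Type*} [Field K] [AddCommGroup M] [Module K M] [AddCommGroup N]
  [Module K N] [AddCommGroup P] [Module K P] [AddCommGroup Q] [Module K Q]

theorem LinearIndependent.exists_linearMap_apply_eq {v : ι → M} (hv : LinearIndependent K v)
    (w : ι → P) : ∃ f : M →ₗ[K] P, ∀ i, f (v i) = w i := by
  obtain ⟨f, hf⟩ := LinearMap.exists_extend (Finsupp.linearCombination K w ∘ₗ hv.repr)
  refine ⟨f, fun i => ?_⟩
  have := LinearMap.congr_fun hf ⟨v i, Submodule.subset_span (Set.mem_range_self i)⟩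
  simpa [hv.repr_eq_single i] using this

theorem LinearMap.exists_lift₂_apply_eq (π : P →ₗ[K] Q) (hπ : Function.Surjective π)
    (G : M →ₗ[K] N →ₗ[K] Q) {v : ι → M} (hv : LinearIndependent K v) (ψ : ι → N →ₗ[K] P)
    (hψ : ∀ i, π ∘ₗ ψ i = G (v i)) :
    ∃ F : M →ₗ[K] N →ₗ[K] P, F.compr₂ π = G ∧ ∀ i, F (v i) = ψ i := by
  obtain ⟨F₀, hF₀⟩ := hv.exists_linearMap_apply_eq ψ
  obtain ⟨σ, hσ⟩ := π.exists_rightInverse_of_surjective (LinearMap.range_eq_top.mpr hπ)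
  refine ⟨F₀ + (G - F₀.compr₂ π).compr₂ σ, ?_, fun i => ?_⟩
  · ext m n
    simp [← LinearMap.comp_apply π σ, hσ]
  · ext n
    simp [hF₀, ← hψ]

end LinearAlgebra

section LocallyConvex

open scoped ComplexOrder

theorem Convex.of_real {𝕜 E : Type*} [RCLike 𝕜] [AddCommGroup E] [Module ℝ E] [Module 𝕜 E]
    [IsScalarTower ℝ 𝕜 E] {s : Set E} (hs : Convex ℝ s) : Convex 𝕜 s := by
  intro x hx y hy a b _ _ hab
  obtain ⟨a, ha, rfl⟩ := RCLike.nonneg_iff_exists_ofReal.mp ‹0 ≤ a›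
  obtain ⟨b, hb, rfl⟩ := RCLike.nonneg_iff_exists_ofReal.mp ‹0 ≤ b›
  rw [← RCLike.real_smul_eq_coe_smul, ← RCLike.real_smul_eq_coe_smul]
  exact hs hx hy ha hb (by exact_mod_cast hab)

theorem LocallyConvexSpace.of_real (𝕜 E : Type*) [RCLike 𝕜] [AddCommGroup E] [Module ℝ E]
    [Module 𝕜 E] [IsScalarTower ℝ 𝕜 E] [TopologicalSpace E] [LocallyConvexSpace ℝ E] :
    LocallyConvexSpace 𝕜 E := by
  refine (locallyConvexSpace_iff_exists_convex_subset 𝕜 E).mpr fun x U hU => ?_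
  obtain ⟨V, hV, hVc, hVU⟩ := (locallyConvexSpace_iff_exists_convex_subset ℝ E).mp ‹_› x U hU
  exact ⟨V, hV, hVc.of_real, hVU⟩

theorem PolynormableSpace.of_real (𝕜 E : Type*) [RCLike 𝕜] [AddCommGroup E] [Module ℝ E]
    [Module 𝕜 E] [IsScalarTower ℝ 𝕜 E] [TopologicalSpace E] [IsTopologicalAddGroup E]
    [ContinuousSMul 𝕜 E] [LocallyConvexSpace ℝ E] : PolynormableSpace 𝕜 E :=
  have : ContinuousSMul ℝ E := IsScalarTower.continuousSMul 𝕜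
  have := LocallyConvexSpace.of_real 𝕜 E
  inferInstance

end LocallyConvex

section Seminorms

variable {𝕜 E : Type*} [AddCommGroup E]

theorem Seminorm.map_sum_le [NormedField 𝕜] [Module 𝕜 E] (p : Seminorm 𝕜 E) {ι : Type*}
    (s : Finset ι) (f : ι → E) : p (∑ i ∈ s, f i) ≤ ∑ i ∈ s, p (f i) :=
  Finset.le_sum_of_subadditive p (map_zero p).le (map_add_le_add p) s f

variable (𝕜) in
theorem PolynormableSpace.nhds_basis_seminorm_ball [NormedField 𝕜] [Module 𝕜 E]
    [TopologicalSpace E] [IsTopologicalAddGroup E] [PolynormableSpace 𝕜 E] :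
    (𝓝 (0 : E)).HasBasis (fun pr : {p : Seminorm 𝕜 E // Continuous p} × ℝ => 0 < pr.2)
      fun pr => pr.1.1.ball 0 pr.2 := by
  refine (PolynormableSpace.withSeminorms 𝕜 E).hasBasis_zero_ball.to_hasBasis
    (fun ⟨s, r⟩ hr => ⟨(⟨s.sup _, Seminorm.continuous_finsetSup fun i _ => i.2⟩, r), hr, le_rfl⟩)
    fun ⟨p, r⟩ hr => ⟨({p}, r), hr, by simp⟩

variable (𝕜) in
theorem tendsto_nhds_of_seminorm_le [NormedField 𝕜] [Module 𝕜 E] [TopologicalSpace E]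
    [PolynormableSpace 𝕜 E] {X : Type*} {l : Filter X} {u : X → E} {y : E}
    (h : ∀ p : Seminorm 𝕜 E, Continuous p →
      ∃ g : X → ℝ, Tendsto g l (𝓝 0) ∧ ∀ x, p (u x - y) ≤ g x) :
    Tendsto u l (𝓝 y) := by
  rw [(PolynormableSpace.withSeminorms 𝕜 E).tendsto_nhds]
  rintro ⟨p, hp⟩ ε hε
  obtain ⟨g, hg, hpg⟩ := h p hp
  filter_upwards [hg (Iio_mem_nhds hε)] with x hx using (hpg x).trans_lt hx

theorem Seminorm.le_div_mul_of_lt_imp_le [RCLike 𝕜] [Module 𝕜 E] {p q : Seminorm 𝕜 E} {r M : ℝ}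
    (hr : 0 < r) (h : ∀ x, q x < r → p x ≤ M) (x : E) : p x ≤ M / r * q x := by
  have key : ∀ δ > 0, p x ≤ M / r * (q x + δ) := by
    intro δ hδ
    have hqδ : 0 < q x + δ := by positivity
    have ht : 0 < r / (q x + δ) := by positivity
    have hscaled := h (((r / (q x + δ) : ℝ) : 𝕜) • x) <| by
      rw [map_smul_eq_mul, RCLike.norm_ofReal, abs_of_pos ht, div_mul_eq_mul_div,
        div_lt_iff₀ hqδ]
      nlinarith
    rw [map_smul_eq_mul, RCLike.norm_ofReal, abs_of_pos ht, div_mul_eq_mul_div,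
      div_le_iff₀ hqδ] at hscaled
    rw [div_mul_eq_mul_div, le_div_iff₀ hr]
    linarith
  refine ge_of_tendsto (x := 𝓝[>] (0 : ℝ)) ?_ (eventually_nhdsWithin_of_forall key)
  exact ((continuous_const.mul (continuous_const.add continuous_id)).tendsto' 0 _
    (by simp)).mono_left nhdsWithin_le_nhds

theorem summable_of_summable_seminorm [NormedField 𝕜] [Module 𝕜 E] [UniformSpace E]
    [IsUniformAddGroup E] [CompleteSpace E] [PolynormableSpace 𝕜 E] {ι : Type*} {f : ι → E}
    (hf : ∀ p : Seminorm 𝕜 E, Continuous p → Summable fun i => p (f i)) : Summable f := by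
  refine summable_iff_vanishing.mpr fun U hU => ?_
  obtain ⟨⟨⟨p, hp⟩, r⟩, hr, hpU⟩ := (PolynormableSpace.nhds_basis_seminorm_ball 𝕜).mem_iff.mp hU
  obtain ⟨s, hs⟩ := summable_iff_vanishing.mp (hf p hp) (Set.Iio r) (Iio_mem_nhds hr)
  refine ⟨s, fun t ht => hpU ?_⟩
  rw [Seminorm.mem_ball_zero]
  exact (p.map_sum_le t f).trans_lt (hs t ht)

theorem HasSum.seminorm_le_of_bounded [NormedField 𝕜] [Module 𝕜 E] [TopologicalSpace E]
    {ι : Type*} {p : Seminorm 𝕜 E} (hp : Continuous p) {f : ι → E}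
    {g : ι → ℝ} {x : E} {y : ℝ} (hf : HasSum f x) (hg : HasSum g y) (hfg : ∀ i, p (f i) ≤ g i) :
    p x ≤ y :=
  le_of_tendsto_of_tendsto' ((hp.tendsto x).comp hf) hg fun t =>
    (p.map_sum_le t f).trans (Finset.sum_le_sum fun i _ => hfg i)

end Seminorms

section Bilinear

variable {𝕜 E N A : Type*} [SeminormedAddCommGroup E] [AddCommGroup N] [TopologicalSpace N]
  [AddCommGroup A] [TopologicalSpace A]

theorem LinearMap.continuous₂_of_seminorm_bound [NormedField 𝕜] [NormedSpace 𝕜 E] [Module 𝕜 N]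
    [IsTopologicalAddGroup N] [Module 𝕜 A] [PolynormableSpace 𝕜 A] (B : E →ₗ[𝕜] N →ₗ[𝕜] A)
    (hB : ∀ p : Seminorm 𝕜 A, Continuous p →
      ∃ q : Seminorm 𝕜 N, Continuous q ∧ ∀ c n, p (B c n) ≤ ‖c‖ * q n) :
    Continuous fun x : E × N => B x.1 x.2 := by
  refine continuous_iff_continuousAt.mpr fun x₀ => tendsto_nhds_of_seminorm_le 𝕜 fun p hp => ?_
  obtain ⟨q, hq, hpq⟩ := hB p hp
  refine ⟨fun x => ‖x.1 - x₀.1‖ * q x.2 + ‖x₀.1‖ * q (x.2 - x₀.2), ?_, fun x => ?_⟩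
  · have : Continuous fun x : E × N => ‖x.1 - x₀.1‖ * q x.2 + ‖x₀.1‖ * q (x.2 - x₀.2) := by
      fun_prop
    simpa using this.tendsto x₀
  · have hsplit : B x.1 x.2 - B x₀.1 x₀.2 = B (x.1 - x₀.1) x.2 + B x₀.1 (x.2 - x₀.2) := by
      simp only [map_sub, LinearMap.sub_apply]
      abel
    rw [hsplit]
    exact (map_add_le_add p _ _).trans (add_le_add (hpq _ _) (hpq _ _))

theorem LinearMap.exists_seminorm_bound_of_continuous₂ [RCLike 𝕜] [NormedSpace 𝕜 E] [Module 𝕜 N]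
    [IsTopologicalAddGroup N] [PolynormableSpace 𝕜 N] [Module 𝕜 A] (B : E →ₗ[𝕜] N →ₗ[𝕜] A)
    (hB : Continuous fun x : E × N => B x.1 x.2) (p : Seminorm 𝕜 A) (hp : Continuous p) :
    ∃ q : Seminorm 𝕜 N, Continuous q ∧ ∀ c n, p (B c n) ≤ ‖c‖ * q n := by
  have hU : (fun x : E × N => B x.1 x.2) ⁻¹' p.ball 0 1 ∈ 𝓝 (0, 0) :=
    hB.continuousAt (by simpa using p.ball_mem_nhds hp one_pos)
  rw [nhds_prod_eq] at hU
  obtain ⟨⟨ε, ⟨q, hq⟩, r⟩, ⟨hε, hr⟩, hsub⟩ :=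
    (Metric.nhds_basis_ball.prod (PolynormableSpace.nhds_basis_seminorm_ball 𝕜)).mem_iff.mp hU
  have hsmall : ∀ c, ‖c‖ < ε → ∀ n, p (B c n) ≤ 1 / r * q n := fun c hc =>
    (p.comp (B c)).le_div_mul_of_lt_imp_le hr fun n hn => le_of_lt <| p.mem_ball_zero.mp <|
      hsub (a := (c, n)) ⟨mem_ball_zero_iff.mpr hc, q.mem_ball_zero.mpr hn⟩
  let C : NNReal := ⟨1 / (r * ε), by positivity⟩
  refine ⟨C • q, ?_, fun c n => ?_⟩
  · rw [FunLike.coe_smul]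
    exact hq.const_smul C
  · have hscaled := (p.comp (B.flip n)).le_div_mul_of_lt_imp_le (q := normSeminorm 𝕜 E) hε
      (fun c hc => hsmall c hc n) c
    simp only [Seminorm.comp_apply, LinearMap.flip_apply, coe_normSeminorm] at hscaled
    calc p (B c n) ≤ 1 / r * q n / ε * ‖c‖ := hscaled
      _ = ‖c‖ * (C • q) n := by
        change _ = ‖c‖ * ((1 / (r * ε)) * q n)
        field_simp

end Bilinear

section LpOne

variable {𝕜 S : Type*} [RCLike 𝕜]

theorem lp.linearIndependent_single_one [DecidableEq S] (p : ENNReal) :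
    LinearIndependent 𝕜 fun s : S => lp.single p s (1 : 𝕜) :=
  LinearIndependent.of_comp (lpSubmodule 𝕜 (fun _ : S => 𝕜) p).subtype
    (Pi.linearIndependent_single_one S 𝕜)

theorem lp.hasSum_norm_one {E : S → Type*} [∀ s, NormedAddCommGroup (E s)] (c : lp E 1) :
    HasSum (fun s => ‖c s‖) ‖c‖ := by
  simpa using lp.hasSum_norm (by norm_num) c

variable {N A : Type*} [AddCommGroup N] [Module 𝕜 N] [AddCommGroup A] [Module 𝕜 A]

theorem seminorm_smul_le_norm_mul (T : S → N →ₗ[𝕜] A) {p : Seminorm 𝕜 A} {q : Seminorm 𝕜 N}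
    (hpq : ∀ s n, p (T s n) ≤ q n) (c : ℓ^1(S, 𝕜)) (n : N) (s : S) :
    p (c s • T s n) ≤ ‖c s‖ * q n := by
  rw [map_smul_eq_mul]
  exact mul_le_mul_of_nonneg_left (hpq s n) (norm_nonneg _)

theorem summable_seminorm_smul (T : S → N →ₗ[𝕜] A) {p : Seminorm 𝕜 A} {q : Seminorm 𝕜 N}
    (hpq : ∀ s n, p (T s n) ≤ q n) (c : ℓ^1(S, 𝕜)) (n : N) :
    Summable fun s => p (c s • T s n) :=
  Summable.of_nonneg_of_le (fun _ => apply_nonneg _ _) (seminorm_smul_le_norm_mul T hpq c n)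
    ((lp.hasSum_norm_one c).mul_right (q n)).summable

open SeparationQuotient in
theorem exists_lp_one_bilinear_hasSum [DecidableEq S] [TopologicalSpace A]
    [IsTopologicalAddGroup A] [ContinuousConstSMul 𝕜 A] (T : S → N →ₗ[𝕜] A)
    (hT : ∀ (c : ℓ^1(S, 𝕜)) n, Summable fun s => c s • T s n) :
    ∃ B : ℓ^1(S, 𝕜) →ₗ[𝕜] N →ₗ[𝕜] A,
      (∀ c n, HasSum (fun s => c s • T s n) (B c n)) ∧ ∀ s, B (lp.single 1 s 1) = T s := by
  have hsumQ (c : ℓ^1(S, 𝕜)) n :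
      HasSum (fun s => mk (c s • T s n)) (∑' s, mk (c s • T s n)) :=
    ((hT c n).map (mkCLM 𝕜 A) continuous_mk).hasSum
  let G : ℓ^1(S, 𝕜) →ₗ[𝕜] N →ₗ[𝕜] SeparationQuotient A :=
    LinearMap.mk₂ 𝕜 (fun c n => ∑' s, mk (c s • T s n))
      (fun c c' n => (hsumQ _ _).unique (by simpa [add_smul] using (hsumQ c n).add (hsumQ c' n)))
      (fun z c n => (hsumQ _ _).unique (by simpa [mul_smul] using (hsumQ c n).const_smul z))
      (fun c n n' => (hsumQ _ _).unique (by simpa using (hsumQ c n).add (hsumQ c n')))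
      (fun z c n => (hsumQ _ _).unique (by simpa [smul_comm z] using (hsumQ c n).const_smul z))
  have hG c n : HasSum (fun s => mk (c s • T s n)) (G c n) := hsumQ c n
  have hsingle s : (mkCLM 𝕜 A : A →ₗ[𝕜] SeparationQuotient A) ∘ₗ T s = G (lp.single 1 s 1) := by
    ext n
    refine (hasSum_ite_eq s (mk (T s n))).unique ?_
    convert hG (lp.single 1 s 1) n using 1
    ext t
    by_cases h : t = s <;> simp [h]
  obtain ⟨B, hBG, hBT⟩ := LinearMap.exists_lift₂_apply_eq _ surjective_mk G
    (lp.linearIndependent_single_one 1) T hsingle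
  refine ⟨B, fun c n => ?_, hBT⟩
  rw [← isInducing_mk.hasSum_iff (g := mkCLM 𝕜 A), show mkCLM 𝕜 A (B c n) = G c n from
    LinearMap.congr_fun₂ hBG c n]
  exact hG c n

theorem exists_continuous_lp_one_bilinear_hasSum [DecidableEq S] [TopologicalSpace N]
    [IsTopologicalAddGroup N] [UniformSpace A] [IsUniformAddGroup A] [ContinuousConstSMul 𝕜 A]
    [CompleteSpace A] [PolynormableSpace 𝕜 A] (T : S → N →ₗ[𝕜] A)
    (hT : ∀ p : Seminorm 𝕜 A, Continuous p →
      ∃ q : Seminorm 𝕜 N, Continuous q ∧ ∀ s n, p (T s n) ≤ q n) :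
    ∃ B : ℓ^1(S, 𝕜) →ₗ[𝕜] N →ₗ[𝕜] A, Continuous (fun x : ℓ^1(S, 𝕜) × N => B x.1 x.2) ∧
      (∀ c n, HasSum (fun s => c s • T s n) (B c n)) ∧ ∀ s, B (lp.single 1 s 1) = T s := by
  obtain ⟨B, hB, hBT⟩ := exists_lp_one_bilinear_hasSum T fun c n =>
    summable_of_summable_seminorm fun p hp =>
      let ⟨_, _, hpq⟩ := hT p hp; summable_seminorm_smul T hpq c n
  refine ⟨B, B.continuous₂_of_seminorm_bound fun p hp => ?_, hB, hBT⟩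
  obtain ⟨q, hq, hpq⟩ := hT p hp
  exact ⟨q, hq, fun c n => (hB c n).seminorm_le_of_bounded hp
    ((lp.hasSum_norm_one c).mul_right (q n)) (seminorm_smul_le_norm_mul T hpq c n)⟩

end LpOne

theorem l1_module_algebra_iff_equicontinuous_general
    (S : Type*) [DecidableEq S]
    (A : Type*) [Ring A] [Algebra ℂ A] [UniformSpace A] [IsUniformAddGroup A]
    [ContinuousSMul ℂ A] [CompleteSpace A] [LocallyConvexSpace ℝ A]
    -- the action of S on A by continuous (unital) algebra endomorphisms:
    (φ : S → A →ₐ[ℂ] A) :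
    -- (i) if the action is equicontinuous, it extends to ℓ¹(S):
    ((∀ p : Seminorm ℂ A, Continuous p → ∃ q : Seminorm ℂ A, Continuous q ∧
        ∀ (s : S) (a : A), p (φ s a) ≤ q a) →
      ∃ F : lp (fun _ : S => ℂ) 1 × A → A,
        Continuous F ∧
        (∀ c, IsLinearMap ℂ fun a : A => F (c, a)) ∧
        (∀ a, IsLinearMap ℂ fun c : lp (fun _ : S => ℂ) 1 => F (c, a)) ∧
        -- absolute summability of (c_s (s·a)) and F (c, a) = ∑_s c_s (s·a):
        (∀ (c : lp (fun _ : S => ℂ) 1) (a : A),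
          (∀ p : Seminorm ℂ A, Continuous p → Summable fun s : S => p (c s • φ s a)) ∧
          HasSum (fun s : S => c s • φ s a) (F (c, a))) ∧
        -- F makes A a left ℓ¹(S)-module algebra (the comultiplication of ℓ¹(S) is
        -- determined by Δ(s) = s ⊗ s, so c·(ab) = ∑_s c_s (s·a)(s·b)):
        (∀ (c : lp (fun _ : S => ℂ) 1) (a b : A),
          HasSum (fun s : S => c s • (φ s a * φ s b)) (F (c, a * b))) ∧
        (∀ (s : S) (a : A), F (lp.single 1 s 1, a) = φ s a)) ∧
    -- (ii) conversely, a jointly continuous ℓ¹(S)-module algebra structure restricting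
    -- to φ on S makes the action of S equicontinuous:
    (∀ F : lp (fun _ : S => ℂ) 1 × A → A,
      Continuous F →
      (∀ c, IsLinearMap ℂ fun a : A => F (c, a)) →
      (∀ a, IsLinearMap ℂ fun c : lp (fun _ : S => ℂ) 1 => F (c, a)) →
      (∀ (s : S) (a : A), F (lp.single 1 s 1, a) = φ s a) →
      ∀ p : Seminorm ℂ A, Continuous p → ∃ q : Seminorm ℂ A, Continuous q ∧
        ∀ (s : S) (a : A), p (φ s a) ≤ q a) := by
  have := PolynormableSpace.of_real ℂ A
  refine ⟨fun hequi => ?_, fun F hF hlin_a hlin_c hsingle p hp => ?_⟩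
  · obtain ⟨B, hBc, hB, hBφ⟩ :=
      exists_continuous_lp_one_bilinear_hasSum (fun s => (φ s).toLinearMap) hequi
    refine ⟨fun x => B x.1 x.2, hBc, fun c => (B c).isLinear, fun a => (B.flip a).isLinear,
      fun c a => ⟨fun p hp => ?_, hB c a⟩, fun c a b => by simpa using hB c (a * b),
      fun s a => by simp [hBφ]⟩
    obtain ⟨q, -, hpq⟩ := hequi p hp
    exact summable_seminorm_smul (fun s => (φ s).toLinearMap) hpq c a
  · let B : lp (fun _ : S => ℂ) 1 →ₗ[ℂ] A →ₗ[ℂ] A :=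
      LinearMap.mk₂ ℂ (fun c a => F (c, a)) (fun c c' a => (hlin_c a).map_add c c')
        (fun z c a => (hlin_c a).map_smul z c) (fun c a a' => (hlin_a c).map_add a a')
        (fun z c a => (hlin_a c).map_smul z a)
    obtain ⟨q, hq, hpq⟩ := B.exists_seminorm_bound_of_continuous₂ hF p hp
    exact ⟨q, hq, fun s a => by simpa [B, hsingle, lp.norm_single] using hpq (lp.single 1 s 1) a⟩

theorem l1_module_algebra_iff_equicontinuous
    (S : Type*) [Monoid S] [DecidableEq S]
    (A : Type*) [Ring A] [Algebra ℂ A] [UniformSpace A] [IsUniformAddGroup A]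
    [IsTopologicalRing A] [ContinuousSMul ℂ A] [CompleteSpace A] [LocallyConvexSpace ℝ A]
    -- the action of S on A by continuous (unital) algebra endomorphisms:
    (φ : S → A →ₐ[ℂ] A)
    (hφone : φ 1 = AlgHom.id ℂ A)
    (hφmul : ∀ s t, φ (s * t) = (φ s).comp (φ t))
    (hφcont : ∀ s, Continuous (φ s)) :
    -- (i) if the action is equicontinuous, it extends to ℓ¹(S):
    ((∀ p : Seminorm ℂ A, Continuous p → ∃ q : Seminorm ℂ A, Continuous q ∧
        ∀ (s : S) (a : A), p (φ s a) ≤ q a) →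
      ∃ F : lp (fun _ : S => ℂ) 1 × A → A,
        Continuous F ∧
        (∀ c, IsLinearMap ℂ fun a : A => F (c, a)) ∧
        (∀ a, IsLinearMap ℂ fun c : lp (fun _ : S => ℂ) 1 => F (c, a)) ∧
        -- absolute summability of (c_s (s·a)) and F (c, a) = ∑_s c_s (s·a):
        (∀ (c : lp (fun _ : S => ℂ) 1) (a : A),
          (∀ p : Seminorm ℂ A, Continuous p → Summable fun s : S => p (c s • φ s a)) ∧
          HasSum (fun s : S => c s • φ s a) (F (c, a))) ∧
        -- F makes A a left ℓ¹(S)-module algebra (the comultiplication of ℓ¹(S) is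
        -- determined by Δ(s) = s ⊗ s, so c·(ab) = ∑_s c_s (s·a)(s·b)):
        (∀ (c : lp (fun _ : S => ℂ) 1) (a b : A),
          HasSum (fun s : S => c s • (φ s a * φ s b)) (F (c, a * b))) ∧
        (∀ (s : S) (a : A), F (lp.single 1 s 1, a) = φ s a)) ∧
    -- (ii) conversely, a jointly continuous ℓ¹(S)-module algebra structure restricting
    -- to φ on S makes the action of S equicontinuous:
    (∀ F : lp (fun _ : S => ℂ) 1 × A → A,
      Continuous F →
      (∀ c, IsLinearMap ℂ fun a : A => F (c, a)) →
      (∀ a, IsLinearMap ℂ fun c : lp (fun _ : S => ℂ) 1 => F (c, a)) →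
      (∀ (s : S) (a : A), F (lp.single 1 s 1, a) = φ s a) →
      ∀ p : Seminorm ℂ A, Continuous p → ∃ q : Seminorm ℂ A, Continuous q ∧
        ∀ (s : S) (a : A), p (φ s a) ≤ q a) :=
  l1_module_algebra_iff_equicontinuous_general S A φ
end
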